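/- arXiv:2311.15329 — 2 statements merged into one kernel-verified Lean document; each statement's English description precedes it below -/
import Mathlib

section
/- Consider the cubic λ³ + p₂λ² + p₁λ + p₀ − α·W·q·λ(λ+1) = 0 where p₂ = 1/τ₁ + 1, p₁ = 1/τ₁ + W^{EI}K₁K₂/τ₁ + I²K₁/(τ₁τ₂), p₀ = I²K₁/(τ₁τ₂), q = K₁/τ₁, with τ₁, τ₂, K₁, I > 0, K₂, W^{EI} ≥ 0, and α, W real with α·W·K₁ < 1. Then this cubic has no root with zero real part. -/
/-- The cubic λ³ + p₂λ² + p₁λ + p₀ − αWq·λ(λ+1), with the model coefficients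
    and α·W·K₁ < 1, has no root with zero real part. -/
theorem cubic_no_imaginary_root
    (τ₁ τ₂ K₁ I K₂ WEI α W : ℝ)
    (hτ₁ : 0 < τ₁) (hτ₂ : 0 < τ₂) (hK₁ : 0 < K₁) (hI : 0 < I)
    (hK₂ : 0 ≤ K₂) (hWEI : 0 ≤ WEI)
    (p₂ p₁ p₀ q : ℝ)
    (hp₂ : p₂ = 1 / τ₁ + 1)
    (hp₁ : p₁ = 1 / τ₁ + WEI * K₁ * K₂ / τ₁ + I ^ 2 * K₁ / (τ₁ * τ₂))
    (hp₀ : p₀ = I ^ 2 * K₁ / (τ₁ * τ₂))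
    (hq : q = K₁ / τ₁)
    (hcond : α * W * K₁ < 1) :
    ∀ lam : ℂ, lam ^ 3 + (p₂ : ℂ) * lam ^ 2 + (p₁ : ℂ) * lam + (p₀ : ℂ)
        - (α : ℂ) * (W : ℂ) * (q : ℂ) * lam * (lam + 1) = 0 →
      lam.re ≠ 0 := by
  intro lam h hre
  obtain ⟨x, y⟩ := lam
  simp only [Complex.ext_iff] at h
  simp only at hre
  subst hre
  obtain ⟨h1, h2⟩ := h
  simp [Complex.ext_iff, pow_succ, Complex.mul_re, Complex.mul_im] at h1 h2
  -- coefficient positivity facts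
  have hA : 0 ≤ WEI * K₁ * K₂ / τ₁ := by positivity
  have hB : 0 < I ^ 2 * K₁ / (τ₁ * τ₂) := by positivity
  have hc : α * W * q < 1 / τ₁ := by
    rw [hq]
    have h' : α * W * (K₁ / τ₁) = (α * W * K₁) / τ₁ := by ring
    rw [h']
    exact (div_lt_div_iff_of_pos_right hτ₁).mpr hcond
  set c := α * W * q with hcdef
  -- h1 : real part = 0, h2 : imag part = 0
  rcases eq_or_ne y 0 with hy | hy
  · subst hy
    simp at h1
    nlinarith [hB]
  · have h2' : y * (p₁ - c - y ^ 2) = 0 := by linear_combination h2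
    have hy2 : y ^ 2 = p₁ - c := by
      rcases mul_eq_zero.mp h2' with h | h
      · exact absurd h hy
      · linarith
    have hd : 0 < 1 / τ₁ - c := by linarith
    have h1' : p₀ = (p₂ - c) * (p₁ - c) := by nlinarith [h1, hy2, sq_nonneg y]
    nlinarith [mul_pos hd hd, mul_nonneg hd.le hA, mul_pos hd hB, hd, hA, hB]
end

section
/- Let p₂, p₁, p₀, q > 0 as defined, α ∈ ℂ real with α ≤ 0 and W > 0. Then the cubic λ³ + p₂λ² + p₁λ + p₀ − α·W·q·λ(λ+1) has no purely imaginary root and no zero root. -/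
/-- If α ≤ 0 and W > 0, the cubic λ³ + p₂λ² + p₁λ + p₀ − αWq·λ(λ+1)
    has no purely imaginary root and no zero root (no root with Re λ = 0). -/
theorem cubic_no_imaginary_root_neg_alpha
    (τ₁ τ₂ K₁ I K₂ WEI α W : ℝ)
    (hτ₁ : 0 < τ₁) (hτ₂ : 0 < τ₂) (hK₁ : 0 < K₁) (hI : 0 < I)
    (hK₂ : 0 ≤ K₂) (hWEI : 0 ≤ WEI) (hα : α ≤ 0) (hW : 0 < W)
    (p₂ p₁ p₀ q : ℝ)
    (hp₂ : p₂ = 1 / τ₁ + 1)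
    (hp₁ : p₁ = 1 / τ₁ + WEI * K₁ * K₂ / τ₁ + I ^ 2 * K₁ / (τ₁ * τ₂))
    (hp₀ : p₀ = I ^ 2 * K₁ / (τ₁ * τ₂))
    (hq : q = K₁ / τ₁) :
    ∀ lam : ℂ, lam.re = 0 →
      lam ^ 3 + (p₂ : ℂ) * lam ^ 2 + (p₁ : ℂ) * lam + (p₀ : ℂ)
        - (α : ℂ) * (W : ℂ) * (q : ℂ) * lam * (lam + 1) ≠ 0 := by
  intro lam hre h
  have h1 := congrArg Complex.re h
  have h2 := congrArg Complex.im h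
  simp [Complex.ext_iff, pow_succ, Complex.mul_re, Complex.mul_im, hre] at h1 h2
  have hp0pos : 0 < p₀ := by rw [hp₀]; positivity
  have hp2gt : 1 < p₂ := by rw [hp₂]; have := one_div_pos.mpr hτ₁; linarith
  have hp1gt : p₀ < p₁ := by
    rw [hp₀, hp₁]
    have h1' : 0 < 1/τ₁ := by positivity
    have h2' : 0 ≤ WEI * K₁ * K₂ / τ₁ := by positivity
    linarith
  have hqpos : 0 < q := by rw [hq]; positivity
  have haw : 0 ≤ -(α * W * q) := by
    nlinarith [mul_nonneg (mul_nonneg (neg_nonneg.mpr hα) hW.le) hqpos.le]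
  rcases eq_or_ne lam.im 0 with hy0 | hy0
  · rw [hy0] at h1; nlinarith
  · have h3 : lam.im * (p₁ - α * W * q - lam.im * lam.im) = 0 := by
      linear_combination h2
    have hy2 : lam.im * lam.im = p₁ - α * W * q := by
      rcases mul_eq_zero.mp h3 with h | h
      · exact absurd h hy0
      · linarith
    nlinarith [mul_nonneg haw haw, mul_nonneg haw hp0pos.le,
      mul_nonneg haw (by linarith : (0:ℝ) ≤ p₁), mul_nonneg haw (by linarith : (0:ℝ) ≤ p₂)]
end
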